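/- arXiv:1112.5388 — 3 statements merged into one kernel-verified Lean document; each statement's English description precedes it below -/
import Mathlib

section
/- Let p ∈ [1,∞), γ > −d and w(x) = |x|^γ. Then the set of Schwartz functions f on ℝ^d whose Fourier transform has compact support is dense in L^p(ℝ^d, w), assuming the Schwartz functions themselves are dense in L^p(ℝ^d, w). -/
/-!
The Fourier transform is a linear homeomorphism of the Schwartz space `𝓢`, so it suffices that
compactly supported functions are dense in `𝓢`. For `u ∈ 𝓢` and a bump `χ` equal to `1` near `0`,
`χ(R⁻¹ ξ) u(ξ) → u` in `𝓢` as `R → ∞`: the error lives where `‖ξ‖ ≥ R`, so trading one power of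
`‖ξ‖` for `R⁻¹` bounds every seminorm of the error by `O(R⁻¹)`, the derivatives of the rescaled
cutoffs being bounded uniformly in `R ≥ 1`.

For `γ > -d` the weight `‖x‖ ^ γ` is locally integrable, so `(1 + ‖x‖) ^ (-N) ‖x‖ ^ γ` is
integrable for large `N`: the weighted measure has temperate growth and `𝓢` embeds continuously
into `L^p(‖x‖ ^ γ dx)`. Approximating `f` by a Schwartz function `g` and then `g` in `𝓢` gives the
theorem.
-/

open MeasureTheory ENNReal Metric Set Filter Module
open scoped FourierTransform Topology SchwartzMap

noncomputable section

def powerWeightMeasure {E : Type*} [NormedAddCommGroup E] [MeasurableSpace E] (μ : Measure E)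
    (γ : ℝ) : Measure E :=
  μ.withDensity fun x => ENNReal.ofReal (‖x‖ ^ γ)

lemma lintegral_norm_rpow_mul_norm_rpow_eq_eLpNorm {E F : Type*} [NormedAddCommGroup E]
    [MeasurableSpace E] [OpensMeasurableSpace E] [NormedAddCommGroup F] {μ : Measure E} {γ : ℝ}
    (f : E → F) {p : ℝ} (hp : 0 < p) :
    (∫⁻ x, ENNReal.ofReal (‖f x‖ ^ p * ‖x‖ ^ γ) ∂μ) ^ (1 / p) =
      eLpNorm f (ENNReal.ofReal p) (powerWeightMeasure μ γ) := by
  rw [eLpNorm_eq_lintegral_rpow_enorm_toReal (by simpa using hp) ofReal_ne_top,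
    ENNReal.toReal_ofReal hp.le, powerWeightMeasure,
    lintegral_withDensity_eq_lintegral_mul_non_measurable _ (by fun_prop)
      (ae_of_all _ fun _ => ofReal_lt_top)]
  congr 1
  refine lintegral_congr fun x => ?_
  rw [Pi.mul_apply, ENNReal.ofReal_mul (by positivity), mul_comm, ← ofReal_norm,
    ENNReal.ofReal_rpow_of_nonneg (norm_nonneg _) hp.le]

lemma norm_rpow_le_one_add_norm_rpow_max {E : Type*} [SeminormedAddCommGroup E] {γ : ℝ} {x : E}
    (hx : 1 ≤ ‖x‖) : ‖x‖ ^ γ ≤ (1 + ‖x‖) ^ max γ 0 := by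
  rcases le_or_gt 0 γ with hγ0 | hγ0
  · calc ‖x‖ ^ γ ≤ (1 + ‖x‖) ^ γ := Real.rpow_le_rpow (norm_nonneg _) (by linarith) hγ0
      _ = (1 + ‖x‖) ^ max γ 0 := by rw [max_eq_left hγ0]
  · calc ‖x‖ ^ γ ≤ 1 := Real.rpow_le_one_of_one_le_of_nonpos hx hγ0.le
      _ ≤ (1 + ‖x‖) ^ max γ 0 := Real.one_le_rpow (by linarith) (le_max_right _ _)

section AddHaar

variable {E : Type*} [NormedAddCommGroup E] [NormedSpace ℝ E] [FiniteDimensional ℝ E]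
  [MeasurableSpace E] [BorelSpace E] {μ : Measure E} [μ.IsAddHaarMeasure] {γ : ℝ}

lemma locallyIntegrable_norm_rpow (hγ : -(finrank ℝ E : ℝ) < γ) :
    LocallyIntegrable (fun x : E => ‖x‖ ^ γ) μ := by
  rcases le_or_gt 0 γ with hγ0 | hγ0
  · exact ((Real.continuous_rpow_const hγ0).comp continuous_norm).locallyIntegrable
  · have hd : 1 ≤ finrank ℝ E := by
      by_contra! h
      simp only [Nat.lt_one_iff.1 h, CharP.cast_eq_zero, neg_zero] at hγ
      linarith
    refine locallyIntegrable_of_norm_le_rpow hd (C := 1) (α := -γ) (by linarith)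
      (ae_of_all _ fun x => ?_) (by fun_prop : Measurable fun x : E => ‖x‖ ^ γ).aestronglyMeasurable
    rw [neg_neg, one_mul, Real.norm_of_nonneg (by positivity)]

lemma integrable_one_add_norm_rpow_neg_mul_norm_rpow (hγ : -(finrank ℝ E : ℝ) < γ) {r : ℝ}
    (hr : finrank ℝ E + max γ 0 < r) :
    Integrable (fun x : E => (1 + ‖x‖) ^ (-r) * ‖x‖ ^ γ) μ := by
  have hpos (x : E) : 0 < 1 + ‖x‖ := by positivity
  have hcont : Continuous fun x : E => (1 + ‖x‖) ^ (-r) :=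
    .rpow_const (by fun_prop) fun x => .inl (hpos x).ne'
  rw [← integrableOn_univ, ← union_compl_self (closedBall (0 : E) 1)]
  refine .union (IntegrableOn.continuousOn_mul hcont.continuousOn
    ((locallyIntegrable_norm_rpow hγ).integrableOn_isCompact (isCompact_closedBall _ _))
    (isCompact_closedBall _ _)) ?_
  refine (integrable_one_add_norm (r := r - max γ 0) (by linarith)).integrableOn.mono'
    (by fun_prop) ((ae_restrict_iff' measurableSet_closedBall.compl).2 (ae_of_all _ fun x hx => ?_))
  have hx : 1 ≤ ‖x‖ := by
    simp only [mem_compl_iff, mem_closedBall_zero_iff, not_le] at hx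
    exact hx.le
  rw [Real.norm_of_nonneg (by positivity), neg_sub, Real.rpow_sub (hpos x),
    Real.rpow_neg (hpos x).le, div_eq_inv_mul]
  gcongr
  exact norm_rpow_le_one_add_norm_rpow_max hx

lemma hasTemperateGrowth_powerWeightMeasure (hγ : -(finrank ℝ E : ℝ) < γ) :
    (powerWeightMeasure μ γ).HasTemperateGrowth := by
  refine ⟨⟨finrank ℝ E + ⌈max γ 0⌉₊ + 1, ?_⟩⟩
  rw [powerWeightMeasure,
    integrable_withDensity_iff (by fun_prop) (ae_of_all _ fun _ => ofReal_lt_top)]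
  refine (integrable_one_add_norm_rpow_neg_mul_norm_rpow (r := finrank ℝ E + ⌈max γ 0⌉₊ + 1) hγ
    ?_).congr (ae_of_all _ fun x => ?_)
  · linarith [Nat.le_ceil (max γ 0)]
  · simp only [ENNReal.toReal_ofReal (Real.rpow_nonneg (norm_nonneg x) γ), Nat.cast_add,
      Nat.cast_one]

end AddHaar

lemma SchwartzMap.eventually_eLpNorm_sub_lt {E F : Type*} [NormedAddCommGroup E] [NormedSpace ℝ E]
    [NormedAddCommGroup F] [NormedSpace ℝ F] [MeasurableSpace E] [OpensMeasurableSpace E]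
    [SecondCountableTopologyEither E F]
    (p : ℝ≥0∞) [Fact (1 ≤ p)] (μ : Measure E) [μ.HasTemperateGrowth] (f : 𝓢(E, F)) {ε : ℝ≥0∞}
    (hε : 0 < ε) : ∀ᶠ g : 𝓢(E, F) in 𝓝 f, eLpNorm (⇑f - ⇑g) p μ < ε := by
  have htoLp : Tendsto (fun g : 𝓢(E, F) => g.toLp p μ) (𝓝 f) (𝓝 (f.toLp p μ)) :=
    continuous_toLp.tendsto f
  filter_upwards [htoLp.eventually (eball_mem_nhds _ hε)] with g hg
  rwa [edist_comm, SchwartzMap.toLp, SchwartzMap.toLp, Lp.edist_toLp_toLp] at hg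

section CompactSupport

open scoped ContDiff

variable {E F : Type*} [NormedAddCommGroup E] [NormedSpace ℝ E] [NormedAddCommGroup F]
  [NormedSpace ℝ F]

lemma ContDiffBump.exists_norm_iteratedFDeriv_comp_smul_sub_one_le [FiniteDimensional ℝ E]
    (b : ContDiffBump (0 : E)) (i : ℕ) :
    ∃ B, ∀ R : ℝ, 1 ≤ R → ∀ x, ‖iteratedFDeriv ℝ i (fun x => b (R⁻¹ • x) - 1) x‖ ≤ B := by
  obtain ⟨C, hC⟩ : ∃ C, ∀ y, ‖iteratedFDeriv ℝ i (fun y => b y - 1) y‖ ≤ C := by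
    rcases eq_or_ne i 0 with rfl | hi
    · refine ⟨1, fun y => ?_⟩
      rw [norm_iteratedFDeriv_zero, Real.norm_eq_abs, abs_le]
      constructor <;> linarith [b.nonneg (x := y), b.le_one (x := y)]
    · have hsub : (fun y => b y - 1) = ⇑b - fun _ => (1 : ℝ) := rfl
      rw [hsub, iteratedFDeriv_sub b.contDiff contDiff_const, iteratedFDeriv_const_of_ne hi,
        sub_zero]
      exact ((b.contDiff (n := ⊤)).continuous_iteratedFDeriv (mod_cast le_top))
        |>.bounded_above_of_compact_support (b.hasCompactSupport.iteratedFDeriv i)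
  refine ⟨C, fun R hR x => ?_⟩
  rw [iteratedFDeriv_comp_const_smul _ (b.contDiff.sub contDiff_const), norm_smul, norm_pow]
  have : ‖R⁻¹‖ ^ i ≤ 1 := pow_le_one₀ (norm_nonneg _) (by
    rw [norm_inv, Real.norm_of_nonneg (by linarith)]; exact inv_le_one_of_one_le₀ hR)
  simpa using mul_le_mul this (hC (R⁻¹ • x)) (norm_nonneg _) zero_le_one

namespace SchwartzMap

variable {ψ : E → ℝ} {B : ℕ → ℝ} {R : ℝ}

lemma norm_pow_mul_norm_iteratedFDeriv_smul_le_of_eqOn_ball (hψ : ContDiff ℝ ∞ ψ)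
    (hB : ∀ i x, ‖iteratedFDeriv ℝ i ψ x‖ ≤ B i) (hR : 0 < R) (hψR : EqOn ψ 0 (ball 0 R))
    (f : 𝓢(E, F)) (k l : ℕ) (x : E) :
    ‖x‖ ^ k * ‖iteratedFDeriv ℝ l (fun y => ψ y • f y) x‖ ≤
      R⁻¹ * ∑ i ∈ Finset.range (l + 1),
        l.choose i * B i * SchwartzMap.seminorm ℝ (k + 1) (l - i) f := by
  have hB0 (i : ℕ) : 0 ≤ B i := (norm_nonneg _).trans (hB i 0)
  rcases lt_or_ge ‖x‖ R with hx | hx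
  · have hzero : (fun y => ψ y • f y) =ᶠ[𝓝 x] 0 := by
      filter_upwards [isOpen_ball.mem_nhds (mem_ball_zero_iff.2 hx)] with y hy
      simp [hψR hy]
    rw [(hzero.iteratedFDeriv ℝ l).eq_of_nhds]
    simp only [Pi.zero_def, iteratedFDeriv_fun_zero, norm_zero, mul_zero]
    exact mul_nonneg (inv_nonneg.2 hR.le) (Finset.sum_nonneg fun i _ =>
      mul_nonneg (mul_nonneg (Nat.cast_nonneg _) (hB0 i)) (apply_nonneg _ _))
  have hxk : ‖x‖ ^ k ≤ R⁻¹ * ‖x‖ ^ (k + 1) := by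
    rw [pow_succ, le_inv_mul_iff₀ hR, mul_comm R (‖x‖ ^ k)]
    gcongr
  calc ‖x‖ ^ k * ‖iteratedFDeriv ℝ l (fun y => ψ y • f y) x‖
      ≤ ‖x‖ ^ k * ∑ i ∈ Finset.range (l + 1),
          l.choose i * ‖iteratedFDeriv ℝ i ψ x‖ * ‖iteratedFDeriv ℝ (l - i) f x‖ := by
        gcongr
        exact norm_iteratedFDeriv_smul_le hψ (f.smooth ⊤) x (mod_cast le_top)
    _ = ∑ i ∈ Finset.range (l + 1),
          l.choose i * ‖iteratedFDeriv ℝ i ψ x‖ * (‖x‖ ^ k * ‖iteratedFDeriv ℝ (l - i) f x‖) := by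
        rw [Finset.mul_sum]
        exact Finset.sum_congr rfl fun i _ => by ring
    _ ≤ ∑ i ∈ Finset.range (l + 1),
          l.choose i * B i * (R⁻¹ * SchwartzMap.seminorm ℝ (k + 1) (l - i) f) := by
        refine Finset.sum_le_sum fun i _ => ?_
        refine mul_le_mul (by gcongr; exact hB i x) ?_ (by positivity)
          (mul_nonneg (Nat.cast_nonneg _) (hB0 i))
        calc ‖x‖ ^ k * ‖iteratedFDeriv ℝ (l - i) f x‖
            ≤ R⁻¹ * (‖x‖ ^ (k + 1) * ‖iteratedFDeriv ℝ (l - i) f x‖) := by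
              rw [← mul_assoc]; gcongr
          _ ≤ _ := by gcongr; exact le_seminorm ℝ (k + 1) (l - i) f x
    _ = _ := by
        rw [Finset.mul_sum]
        exact Finset.sum_congr rfl fun i _ => by ring

variable [FiniteDimensional ℝ E]

lemma tendsto_smulLeftCLM_bump_comp_smul (b : ContDiffBump (0 : E)) (f : 𝓢(E, F)) :
    Tendsto (fun R : ℝ => smulLeftCLM F (fun x => b (R⁻¹ • x)) f) atTop (𝓝 f) := by
  choose B hB using b.exists_norm_iteratedFDeriv_comp_smul_sub_one_le
  rw [(schwartz_withSeminorms ℝ E F).tendsto_nhds _ f]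
  rintro ⟨k, l⟩ ε hε
  set A := ∑ i ∈ Finset.range (l + 1),
    l.choose i * B i * SchwartzMap.seminorm ℝ (k + 1) (l - i) f
  have hlim : Tendsto (fun R : ℝ => (R * b.rIn)⁻¹ * A) atTop (𝓝 0) := by
    simpa using (tendsto_inv_atTop_zero.comp (tendsto_id.atTop_mul_const b.rIn_pos)).mul_const A
  filter_upwards [hlim.eventually (gt_mem_nhds hε), eventually_ge_atTop 1] with R hRε hR
  have hRpos : 0 < R := by linarith
  have hψ : ContDiff ℝ ∞ fun x => b (R⁻¹ • x) - 1 :=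
    (b.contDiff.comp (contDiff_const_smul _)).sub contDiff_const
  have hχ : (fun x => b (R⁻¹ • x)).HasTemperateGrowth :=
    (b.hasCompactSupport.comp_smul (inv_ne_zero hRpos.ne')).hasTemperateGrowth
      (b.contDiff.comp (contDiff_const_smul _))
  have hcoe : ⇑(smulLeftCLM F (fun x => b (R⁻¹ • x)) f - f) =
      fun y => (b (R⁻¹ • y) - 1) • f y := by
    ext y
    simp [smulLeftCLM_apply_apply hχ, sub_smul]
  have hvanish : EqOn (fun x => b (R⁻¹ • x) - 1) 0 (ball 0 (R * b.rIn)) := by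
    intro x hx
    rw [Pi.zero_apply, sub_eq_zero]
    refine b.one_of_mem_closedBall (mem_closedBall_zero_iff.2 ?_)
    rw [norm_smul, norm_inv, Real.norm_of_nonneg hRpos.le, inv_mul_le_iff₀ hRpos]
    exact (mem_ball_zero_iff.1 hx).le
  have hbound (x : E) : ‖x‖ ^ k *
      ‖iteratedFDeriv ℝ l ⇑(smulLeftCLM F (fun x => b (R⁻¹ • x)) f - f) x‖ ≤
        (R * b.rIn)⁻¹ * A := by
    rw [hcoe]
    exact norm_pow_mul_norm_iteratedFDeriv_smul_le_of_eqOn_ball hψ (hB · R hR)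
      (mul_pos hRpos b.rIn_pos) hvanish f k l x
  exact (seminorm_le_bound ℝ k l _ (le_trans (by positivity) (hbound 0)) hbound).trans_lt hRε

theorem dense_hasCompactSupport : Dense {f : 𝓢(E, F) | HasCompactSupport f} := by
  intro f
  let b : ContDiffBump (0 : E) := default
  refine mem_closure_of_tendsto (tendsto_smulLeftCLM_bump_comp_smul b f)
    (eventually_gt_atTop 0 |>.mono fun R hR => ?_)
  exact (b.hasCompactSupport.comp_smul (inv_ne_zero hR.ne')).mono'
    ((subset_tsupport _).trans ((tsupport_smulLeftCLM_subset _ f).trans inter_subset_right))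

end SchwartzMap

end CompactSupport

theorem SchwartzMap.dense_hasCompactSupport_fourier {V G : Type*} [NormedAddCommGroup V]
    [InnerProductSpace ℝ V] [FiniteDimensional ℝ V] [MeasurableSpace V] [BorelSpace V]
    [NormedAddCommGroup G] [NormedSpace ℂ G] [CompleteSpace G] :
    Dense {f : 𝓢(V, G) | HasCompactSupport (𝓕 ⇑f)} := by
  have := (dense_hasCompactSupport (E := V) (F := G)).preimage
    (FourierTransform.fourierCLE ℂ 𝓢(V, G)).isOpenMap
  simpa [preimage, fourier_coe] using this

theorem dense_schwartz_compact_fourier_support_general (d : ℕ) (p γ : ℝ)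
    (hp : 1 ≤ p) (hγ : -(d : ℝ) < γ)
    (hdense : ∀ f : EuclideanSpace ℝ (Fin d) → ℂ, Measurable f →
      (∫⁻ x, ENNReal.ofReal (‖f x‖ ^ p * ‖x‖ ^ γ)) < ∞ → ∀ ε : ℝ, 0 < ε →
      ∃ g : SchwartzMap (EuclideanSpace ℝ (Fin d)) ℂ,
        (∫⁻ x, ENNReal.ofReal (‖f x - g x‖ ^ p * ‖x‖ ^ γ)) ^ (1 / p) < ENNReal.ofReal ε) :
    ∀ f : EuclideanSpace ℝ (Fin d) → ℂ, Measurable f →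
      (∫⁻ x, ENNReal.ofReal (‖f x‖ ^ p * ‖x‖ ^ γ)) < ∞ → ∀ ε : ℝ, 0 < ε →
      ∃ g : SchwartzMap (EuclideanSpace ℝ (Fin d)) ℂ,
        HasCompactSupport (𝓕 (⇑g)) ∧
        (∫⁻ x, ENNReal.ofReal (‖f x - g x‖ ^ p * ‖x‖ ^ γ)) ^ (1 / p) < ENNReal.ofReal ε := by
  intro f hf hfin ε hε
  have hq : 1 ≤ ENNReal.ofReal p := by simpa using hp
  have : Fact (1 ≤ ENNReal.ofReal p) := ⟨hq⟩
  have := hasTemperateGrowth_powerWeightMeasure (μ := volume)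
    (E := EuclideanSpace ℝ (Fin d)) (by simpa using hγ)
  obtain ⟨g, hg⟩ := hdense f hf hfin (ε / 2) (half_pos hε)
  obtain ⟨h, hh, hgh⟩ := SchwartzMap.dense_hasCompactSupport_fourier.inter_nhds_nonempty
    (g.eventually_eLpNorm_sub_lt (ENNReal.ofReal p) (powerWeightMeasure volume γ)
      (ofReal_pos.2 (half_pos hε)))
  refine ⟨h, hh, ?_⟩
  rw [lintegral_norm_rpow_mul_norm_rpow_eq_eLpNorm _ (by linarith)] at hg ⊢
  calc eLpNorm (fun x => f x - h x) _ _
      = eLpNorm ((fun x => f x - g x) + (⇑g - ⇑h)) _ _ := by congr 1; ext; simp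
    _ ≤ _ := eLpNorm_add_le (hf.aestronglyMeasurable.sub g.continuous.aestronglyMeasurable)
        (g.continuous.sub h.continuous).aestronglyMeasurable hq
    _ < ENNReal.ofReal (ε / 2) + ENNReal.ofReal (ε / 2) := ENNReal.add_lt_add hg hgh
    _ = ENNReal.ofReal ε := by rw [← ofReal_add (by positivity) (by positivity), add_halves]

/-- If Schwartz functions are dense in the weighted space `L^p(ℝ^d, |x|^γ)`, then so are the
Schwartz functions whose Fourier transform has compact support. -/
theorem dense_schwartz_compact_fourier_support (d : ℕ) (hd : 1 ≤ d) (p γ : ℝ)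
    (hp : 1 ≤ p) (hγ : -(d : ℝ) < γ)
    (hdense : ∀ f : EuclideanSpace ℝ (Fin d) → ℂ, Measurable f →
      (∫⁻ x, ENNReal.ofReal (‖f x‖ ^ p * ‖x‖ ^ γ)) < ∞ → ∀ ε : ℝ, 0 < ε →
      ∃ g : SchwartzMap (EuclideanSpace ℝ (Fin d)) ℂ,
        (∫⁻ x, ENNReal.ofReal (‖f x - g x‖ ^ p * ‖x‖ ^ γ)) ^ (1 / p) < ENNReal.ofReal ε) :
    ∀ f : EuclideanSpace ℝ (Fin d) → ℂ, Measurable f →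
      (∫⁻ x, ENNReal.ofReal (‖f x‖ ^ p * ‖x‖ ^ γ)) < ∞ → ∀ ε : ℝ, 0 < ε →
      ∃ g : SchwartzMap (EuclideanSpace ℝ (Fin d)) ℂ,
        HasCompactSupport (𝓕 (⇑g)) ∧
        (∫⁻ x, ENNReal.ofReal (‖f x - g x‖ ^ p * ‖x‖ ^ γ)) ^ (1 / p) < ENNReal.ofReal ε :=
  dense_schwartz_compact_fourier_support_general d p γ hp hγ hdense
end
end

section
/- Let d ≥ 2, 0 < s_0 < d, a ∈ (s_0, d), b > 0, and define the radial function g(x) = |x|^{−a} (log(1/|x|))^{−b} for 0 < |x| ≤ 1/2 and g = 0 otherwise. Then the Riesz potential f = (−Δ)^{−s_0/2} g satisfies the pointwise lower bound f(x) ≥ C |x|^{s_0 − a} (log(2/|x|))^{−b} for all 0 < |x| ≤ 1/2, with a constant C > 0. -/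
/-!
The kernel `‖x - y‖ ^ (s₀ - d)` is locally integrable, bounded away from `x`, and `g` is
integrable and bounded near `x`, so the integrand is integrable. It is nonnegative, so it suffices
to bound it below on the ball `B` of radius `|x|/4` around `x/2`. This ball is invariant under
`y ↦ x - y`, and on it both `|y|` and `|x - y|` lie in `[|x|/4, |x|]`. There the integrand is at least
`|x|^(s₀-d) · |x|^(-a) · (2 log(2/|x|))^(-b)`, using `log(1/|y|) ≤ log(4/|x|) ≤ 2 log(2/|x|)`,
and `vol B` is a constant multiple of `|x|^d`.
-/

open MeasureTheory Metric Module

section Kernel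

variable {E : Type*} [NormedAddCommGroup E] [NormedSpace ℝ E] [FiniteDimensional ℝ E]
  [MeasurableSpace E] [BorelSpace E] {μ : Measure E} [μ.IsAddHaarMeasure]

lemma locallyIntegrable_norm_sub_rpow (hdim : 1 ≤ finrank ℝ E) {p : ℝ}
    (hp : -(finrank ℝ E : ℝ) < p) (x : E) :
    LocallyIntegrable (fun y => ‖x - y‖ ^ p) μ := by
  have h0 : LocallyIntegrable (fun y : E => ‖y‖ ^ p) μ :=
    locallyIntegrable_of_norm_le_rpow hdim (C := 1) (α := -p) (by linarith)
      (ae_of_all _ fun y => by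
        rw [neg_neg, one_mul, Real.norm_of_nonneg (Real.rpow_nonneg (norm_nonneg y) p)])
      (by fun_prop : Measurable fun y : E => ‖y‖ ^ p).aestronglyMeasurable
  rw [← (measurePreserving_sub_right μ x).map_eq] at h0
  simpa [Function.comp_def, norm_sub_rev] using
    (locallyIntegrable_map_homeomorph (Homeomorph.subRight x)).1 h0

lemma integrable_norm_sub_rpow_mul {p : ℝ} (hp : -(finrank ℝ E : ℝ) < p) (hp0 : p ≤ 0)
    {x : E} {ρ M : ℝ} (hρ : 0 < ρ) {f : E → ℝ} (hf : Integrable f μ)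
    (hfM : ∀ y ∈ closedBall x ρ, ‖f y‖ ≤ M) :
    Integrable (fun y => ‖x - y‖ ^ p * f y) μ := by
  have hdim : 1 ≤ finrank ℝ E := Nat.cast_pos (α := ℝ).1 (by linarith)
  have hnear : IntegrableOn (fun y => ‖x - y‖ ^ p * f y) (closedBall x ρ) μ :=
    ((locallyIntegrable_norm_sub_rpow hdim hp x).integrableOn_isCompact
      (isCompact_closedBall x ρ)).mul_bdd hf.aestronglyMeasurable.restrict
      ((ae_restrict_iff' measurableSet_closedBall).2 (ae_of_all _ hfM))
  have hfar : IntegrableOn (fun y => ‖x - y‖ ^ p * f y) (closedBall x ρ)ᶜ μ := by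
    refine hf.integrableOn.bdd_mul (c := ρ ^ p)
      (by fun_prop : Measurable fun y => ‖x - y‖ ^ p).aestronglyMeasurable ?_
    refine (ae_restrict_iff' measurableSet_closedBall.compl).2 (ae_of_all _ fun y hy => ?_)
    have hρy : ρ ≤ ‖x - y‖ := by
      rw [Set.mem_compl_iff, mem_closedBall, dist_comm, dist_eq_norm, not_le] at hy
      exact hy.le
    rw [Real.norm_of_nonneg (Real.rpow_nonneg (norm_nonneg _) p)]
    exact Real.rpow_le_rpow_of_nonpos hρ hρy hp0
  simpa using hnear.union hfar

end Kernel

noncomputable def logSingularProfile (a b t : ℝ) : ℝ :=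
  if 0 < t ∧ t ≤ 1 / 2 then t ^ (-a) * Real.log (1 / t) ^ (-b) else 0

section Profile

variable {a b : ℝ}

lemma log_two_le_log_one_div {t : ℝ} (ht : 0 < t) (ht2 : t ≤ 1 / 2) :
    Real.log 2 ≤ Real.log (1 / t) :=
  Real.log_le_log two_pos (by rw [le_div_iff₀ ht]; linarith)

lemma logSingularProfile_nonneg (t : ℝ) : 0 ≤ logSingularProfile a b t := by
  unfold logSingularProfile
  split_ifs with ht
  · exact mul_nonneg (Real.rpow_nonneg ht.1.le _) (Real.rpow_nonneg
      ((Real.log_nonneg one_le_two).trans (log_two_le_log_one_div ht.1 ht.2)) _)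
  · exact le_rfl

lemma measurable_logSingularProfile : Measurable (logSingularProfile a b) :=
  Measurable.ite (measurableSet_Ioi.inter measurableSet_Iic) (by fun_prop) measurable_const

lemma logSingularProfile_le (hb : 0 ≤ b) {t : ℝ} (ht : 0 ≤ t) :
    logSingularProfile a b t ≤ Real.log 2 ^ (-b) * t ^ (-a) := by
  unfold logSingularProfile
  split_ifs with h
  · rw [mul_comm]
    exact mul_le_mul_of_nonneg_right
      (Real.rpow_le_rpow_of_nonpos (Real.log_pos one_lt_two) (log_two_le_log_one_div h.1 h.2)
        (neg_nonpos.2 hb))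
      (Real.rpow_nonneg ht _)
  · exact mul_nonneg (Real.rpow_nonneg (Real.log_pos one_lt_two).le _) (Real.rpow_nonneg ht _)

lemma le_logSingularProfile (ha : 0 ≤ a) (hb : 0 ≤ b) {r t : ℝ} (hr : 0 < r) (hr2 : r ≤ 1 / 2)
    (hrt : r / 4 ≤ t) (htr : t ≤ r) :
    r ^ (-a) * (2 * Real.log (2 / r)) ^ (-b) ≤ logSingularProfile a b t := by
  have ht : 0 < t := by linarith
  have hL : Real.log 2 ≤ Real.log (2 / r) :=
    Real.log_le_log two_pos (by rw [le_div_iff₀ hr]; linarith)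
  have hlog : Real.log (1 / t) ≤ 2 * Real.log (2 / r) := by
    calc Real.log (1 / t) ≤ Real.log (2 * (2 / r)) :=
          Real.log_le_log (by positivity) (by rw [div_le_iff₀ ht]; field_simp; linarith)
      _ = Real.log 2 + Real.log (2 / r) := Real.log_mul two_ne_zero (by positivity)
      _ ≤ 2 * Real.log (2 / r) := by linarith
  rw [logSingularProfile, if_pos ⟨ht, htr.trans hr2⟩]
  exact mul_le_mul (Real.rpow_le_rpow_of_nonpos ht htr (neg_nonpos.2 ha))
    (Real.rpow_le_rpow_of_nonpos
      ((Real.log_pos one_lt_two).trans_le (log_two_le_log_one_div ht (htr.trans hr2))) hlog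
      (neg_nonpos.2 hb))
    (Real.rpow_nonneg (by linarith [Real.log_pos one_lt_two]) _) (Real.rpow_nonneg ht.le _)

end Profile

section Midpoint

variable {E : Type*} [NormedAddCommGroup E] [NormedSpace ℝ E] {x y : E} {a b p : ℝ}

lemma sub_mem_closedBall_inv_two_smul {ρ : ℝ} (hy : y ∈ closedBall ((2 : ℝ)⁻¹ • x) ρ) :
    x - y ∈ closedBall ((2 : ℝ)⁻¹ • x) ρ := by
  rw [mem_closedBall_iff_norm] at hy ⊢
  rwa [show x - y - (2 : ℝ)⁻¹ • x = -(y - (2 : ℝ)⁻¹ • x) by module, norm_neg]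

lemma norm_mem_Icc_of_mem_closedBall_inv_two_smul
    (hy : y ∈ closedBall ((2 : ℝ)⁻¹ • x) (‖x‖ / 4)) : ‖y‖ ∈ Set.Icc (‖x‖ / 4) ‖x‖ := by
  rw [mem_closedBall_iff_norm] at hy
  have hx : ‖(2 : ℝ)⁻¹ • x‖ = ‖x‖ / 2 := by
    rw [norm_smul, Real.norm_of_nonneg (by norm_num)]; ring
  have h1 := norm_sub_norm_le ((2 : ℝ)⁻¹ • x) (-(y - (2 : ℝ)⁻¹ • x))
  have h2 := norm_add_le ((2 : ℝ)⁻¹ • x) (y - (2 : ℝ)⁻¹ • x)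
  rw [sub_neg_eq_add, add_sub_cancel, norm_neg] at h1
  rw [add_sub_cancel] at h2
  constructor <;> linarith

lemma le_norm_sub_rpow_mul_logSingularProfile (hp0 : p ≤ 0) (ha : 0 ≤ a) (hb : 0 ≤ b)
    (hx : 0 < ‖x‖) (hx2 : ‖x‖ ≤ 1 / 2) (hy : y ∈ closedBall ((2 : ℝ)⁻¹ • x) (‖x‖ / 4)) :
    ‖x‖ ^ p * (‖x‖ ^ (-a) * (2 * Real.log (2 / ‖x‖)) ^ (-b)) ≤
      ‖x - y‖ ^ p * logSingularProfile a b ‖y‖ := by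
  obtain ⟨hxy, hyx⟩ := norm_mem_Icc_of_mem_closedBall_inv_two_smul hy
  obtain ⟨hx_sub, hsub_x⟩ :=
    norm_mem_Icc_of_mem_closedBall_inv_two_smul (sub_mem_closedBall_inv_two_smul hy)
  have hL : 0 ≤ Real.log (2 / ‖x‖) := Real.log_nonneg (by rw [le_div_iff₀ hx]; linarith)
  exact mul_le_mul (Real.rpow_le_rpow_of_nonpos (by linarith) hsub_x hp0)
    (le_logSingularProfile ha hb hx hx2 hxy hyx)
    (mul_nonneg (Real.rpow_nonneg hx.le _) (Real.rpow_nonneg (by linarith) _))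
    (Real.rpow_nonneg (norm_nonneg _) _)

end Midpoint

lemma mul_measureReal_le_integral_of_le {X : Type*} [MeasurableSpace X] {μ : Measure X}
    {f : X → ℝ} {s : Set X} {m : ℝ} (hf : Integrable f μ) (hf0 : 0 ≤ f) (hs : MeasurableSet s)
    (hμs : μ s ≠ ⊤) (hm : ∀ y ∈ s, m ≤ f y) : m * μ.real s ≤ ∫ y, f y ∂μ :=
  (setIntegral_ge_of_const_le_real hs hμs hm hf.integrableOn).trans
    (setIntegral_le_integral hf (ae_of_all _ hf0))

section Euclidean

variable {E : Type*} [NormedAddCommGroup E] [NormedSpace ℝ E] [FiniteDimensional ℝ E]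
  [MeasurableSpace E] [BorelSpace E] {μ : Measure E} [μ.IsAddHaarMeasure] {a b p : ℝ}

lemma integrable_logSingularProfile_norm (hdim : 1 ≤ finrank ℝ E) (ha : a < finrank ℝ E)
    (hb : 0 ≤ b) : Integrable (fun y : E => logSingularProfile a b ‖y‖) μ := by
  have hloc : LocallyIntegrable (fun y : E => logSingularProfile a b ‖y‖) μ :=
    locallyIntegrable_of_norm_le_rpow hdim ha
      (ae_of_all _ fun y => by
        rw [Real.norm_of_nonneg (logSingularProfile_nonneg _)]
        exact logSingularProfile_le hb (norm_nonneg y))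
      (measurable_logSingularProfile.comp measurable_norm).aestronglyMeasurable
  refine (integrableOn_iff_integrable_of_support_subset fun y hy => ?_).1
    (hloc.integrableOn_isCompact (isCompact_closedBall 0 (1 / 2)))
  by_contra hy'
  rw [mem_closedBall_zero_iff] at hy'
  exact hy (if_neg fun h => hy' h.2)

lemma integrable_norm_sub_rpow_mul_logSingularProfile (hp : -(finrank ℝ E : ℝ) < p)
    (hp0 : p ≤ 0) (ha : 0 ≤ a) (had : a < finrank ℝ E) (hb : 0 ≤ b) {x : E} (hx : 0 < ‖x‖) :
    Integrable (fun y => ‖x - y‖ ^ p * logSingularProfile a b ‖y‖) μ := by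
  have hdim : 1 ≤ finrank ℝ E := Nat.cast_pos (α := ℝ).1 (by linarith)
  refine integrable_norm_sub_rpow_mul (ρ := ‖x‖ / 2) (M := Real.log 2 ^ (-b) * (‖x‖ / 2) ^ (-a))
    hp hp0 (by positivity) (integrable_logSingularProfile_norm hdim had hb) fun y hy => ?_
  have hxy : ‖x‖ / 2 ≤ ‖y‖ := by
    rw [mem_closedBall_iff_norm'] at hy
    linarith [norm_sub_norm_le x y]
  rw [Real.norm_of_nonneg (logSingularProfile_nonneg _)]
  exact (logSingularProfile_le hb (norm_nonneg y)).trans <|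
    mul_le_mul_of_nonneg_left (Real.rpow_le_rpow_of_nonpos (by positivity) hxy (neg_nonpos.2 ha))
      (Real.rpow_nonneg (Real.log_pos one_lt_two).le _)

end Euclidean

theorem riesz_potential_lower_bound_general (d : ℕ) (s0 a b c : ℝ)
    (hs0 : 0 < s0) (hs0d : s0 < d) (ha : s0 < a) (had : a < d) (hb : 0 < b) (hc : 0 < c)
    (g : EuclideanSpace ℝ (Fin d) → ℝ)
    (hg : ∀ x, g x = if 0 < ‖x‖ ∧ ‖x‖ ≤ 1 / 2 then
        ‖x‖ ^ (-a) * Real.log (1 / ‖x‖) ^ (-b) else 0) :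
    ∃ C : ℝ, 0 < C ∧ ∀ x : EuclideanSpace ℝ (Fin d), 0 < ‖x‖ → ‖x‖ ≤ 1 / 2 →
      C * ‖x‖ ^ (s0 - a) * Real.log (2 / ‖x‖) ^ (-b) ≤
        c * ∫ y, ‖x - y‖ ^ (s0 - (d : ℝ)) * g y := by
  obtain rfl : g = fun y => logSingularProfile a b ‖y‖ := funext hg
  set V := volume.real (ball (0 : EuclideanSpace ℝ (Fin d)) 1)
  have hV : 0 < V := ENNReal.toReal_pos (measure_ball_pos _ _ one_pos).ne' measure_ball_lt_top.ne
  refine ⟨c * (V * 2 ^ (-b) / 4 ^ d), by positivity, fun x hx hx2 => ?_⟩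
  set r := ‖x‖
  have hL : 0 ≤ Real.log (2 / r) := Real.log_nonneg (by rw [le_div_iff₀ hx]; linarith)
  have hr : r ^ (s0 - d) * r ^ (-a) * r ^ d = r ^ (s0 - a) := by
    rw [← Real.rpow_natCast, ← Real.rpow_add hx, ← Real.rpow_add hx]; ring_nf
  have hvol : volume.real (closedBall ((2 : ℝ)⁻¹ • x) (r / 4)) = (r / 4) ^ d * V := by
    rw [Measure.addHaar_real_closedBall _ _ (by positivity), finrank_euclideanSpace_fin]
  calc c * (V * 2 ^ (-b) / 4 ^ d) * r ^ (s0 - a) * Real.log (2 / r) ^ (-b)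
      = c * (r ^ (s0 - d) * (r ^ (-a) * (2 * Real.log (2 / r)) ^ (-b)) *
          volume.real (closedBall ((2 : ℝ)⁻¹ • x) (r / 4))) := by
        rw [hvol, Real.mul_rpow two_pos.le hL, div_pow, ← hr]
        field_simp
    _ ≤ c * ∫ y, ‖x - y‖ ^ (s0 - (d : ℝ)) * logSingularProfile a b ‖y‖ := by
        gcongr
        refine mul_measureReal_le_integral_of_le ?_
          (fun y => mul_nonneg (Real.rpow_nonneg (norm_nonneg _) _) (logSingularProfile_nonneg _))
          measurableSet_closedBall measure_closedBall_lt_top.ne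
          fun y hy => le_norm_sub_rpow_mul_logSingularProfile (by linarith) (by linarith) hb.le
            hx hx2 hy
        exact integrable_norm_sub_rpow_mul_logSingularProfile
          (by rw [finrank_euclideanSpace_fin]; linarith) (by linarith) (by linarith)
          (by rwa [finrank_euclideanSpace_fin]) hb.le hx

/-- Pointwise lower bound for the Riesz potential of
`g(x) = |x|^{-a} (log(1/|x|))^{-b} 𝟙_{0<|x|≤1/2}` in dimension `d ≥ 2`:
`(-Δ)^{-s_0/2} g (x) ≥ C |x|^{s_0-a} (log(2/|x|))^{-b}` for `0 < |x| ≤ 1/2`. -/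
theorem riesz_potential_lower_bound (d : ℕ) (hd : 2 ≤ d) (s0 a b c : ℝ)
    (hs0 : 0 < s0) (hs0d : s0 < d) (ha : s0 < a) (had : a < d) (hb : 0 < b) (hc : 0 < c)
    (g : EuclideanSpace ℝ (Fin d) → ℝ)
    (hg : ∀ x, g x = if 0 < ‖x‖ ∧ ‖x‖ ≤ 1 / 2 then
        ‖x‖ ^ (-a) * Real.log (1 / ‖x‖) ^ (-b) else 0) :
    ∃ C : ℝ, 0 < C ∧ ∀ x : EuclideanSpace ℝ (Fin d), 0 < ‖x‖ → ‖x‖ ≤ 1 / 2 →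
      C * ‖x‖ ^ (s0 - a) * Real.log (2 / ‖x‖) ^ (-b) ≤
        c * ∫ y, ‖x - y‖ ^ (s0 - (d : ℝ)) * g y :=
  riesz_potential_lower_bound_general d s0 a b c hs0 hs0d ha had hb hc g hg
end

section
/- Let d = 1, 0 < s_0 < 1, a ∈ (s_0, 1), b > 0, and g(y) = |y|^{−a}(log(1/|y|))^{−b} 𝟙_{(0,1/2]}(|y|). Then f(x) = c ∫_{−1/2}^{1/2} |x − y|^{s_0−1} g(y) dy satisfies f(x) ≥ C x^{s_0 − a} (log(2/x))^{−b} for all x ∈ (0, 1/2], with C > 0. -/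
open MeasureTheory ENNReal NNReal

noncomputable section

open Real Set

/-! On `(x/2, x]` the weight is at least `x^{-a} (log (2/x))^{-b}` and the kernel integrates to
`(x/2)^{s₀}/s₀`. The integrand is nonnegative, and integrable on `[-1/2, 1/2]` because its two
singularities, at `0` and at `x`, are separated, so the integral over `[-1/2, 1/2]` dominates the
one over `(x/2, x]`. -/

lemma intervalIntegrable_abs_rpow {p : ℝ} (hp : -1 < p) (A B : ℝ) :
    IntervalIntegrable (fun y : ℝ => |y| ^ p) volume A B := by
  have from_zero_of_nonneg (t : ℝ) (ht : 0 ≤ t) :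
      IntervalIntegrable (fun y : ℝ => |y| ^ p) volume 0 t := by
    have h := intervalIntegral.intervalIntegrable_rpow' (a := 0) (b := t) hp
    rw [intervalIntegrable_iff, uIoc_of_le ht] at h ⊢
    exact h.congr_fun (fun y hy => by rw [abs_of_pos hy.1]) measurableSet_Ioc
  have from_zero (t : ℝ) : IntervalIntegrable (fun y : ℝ => |y| ^ p) volume 0 t := by
    rcases le_total 0 t with ht | ht
    · exact from_zero_of_nonneg t ht
    · simpa using (IntervalIntegrable.iff_comp_neg (by simp)).mp
        (from_zero_of_nonneg (-t) (by linarith))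
  exact (from_zero A).symm.trans (from_zero B)

lemma intervalIntegrable_abs_sub_rpow {p : ℝ} (hp : -1 < p) (x A B : ℝ) :
    IntervalIntegrable (fun y : ℝ => |x - y| ^ p) volume A B := by
  simpa using (intervalIntegrable_abs_rpow hp (x - A) (x - B)).comp_sub_left x

lemma integral_Ioc_abs_sub_rpow {s : ℝ} (hs : 0 < s) (x : ℝ) {h : ℝ} (hh : 0 ≤ h) :
    ∫ y in Ioc (x - h) x, |x - y| ^ (s - 1) = h ^ s / s := by
  rw [← intervalIntegral.integral_of_le (by linarith),
    intervalIntegral.integral_comp_sub_left (fun t : ℝ => |t| ^ (s - 1)) x, sub_self,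
    sub_sub_cancel x h]
  have abs_eq : EqOn (fun t : ℝ => |t| ^ (s - 1)) (fun t : ℝ => t ^ (s - 1)) (uIcc 0 h) := by
    intro t ht
    rw [uIcc_of_le hh] at ht
    simp only [abs_of_nonneg ht.1]
  rw [intervalIntegral.integral_congr abs_eq, integral_rpow (Or.inl (by linarith)),
    sub_add_cancel, Real.zero_rpow hs.ne', sub_zero]

/-- One of `u`, `v` is at least `r / 2`, and that factor's power is then at most that of `r / 2`. -/
lemma rpow_mul_rpow_le_of_le_add {p q r u v : ℝ} (hp : p ≤ 0) (hq : q ≤ 0) (hr : 0 < r)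
    (hu : 0 ≤ u) (hv : 0 ≤ v) (huv : r ≤ u + v) :
    u ^ p * v ^ q ≤ (r / 2) ^ p * v ^ q + (r / 2) ^ q * u ^ p := by
  have hup := rpow_nonneg hu p
  have hvq := rpow_nonneg hv q
  rcases le_total (r / 2) u with hru | hru
  · have := mul_le_mul_of_nonneg_right (Real.rpow_le_rpow_of_nonpos (by positivity) hru hp) hvq
    nlinarith [rpow_nonneg (by positivity : 0 ≤ r / 2) q]
  · have hrv : r / 2 ≤ v := by linarith
    have := mul_le_mul_of_nonneg_left (Real.rpow_le_rpow_of_nonpos (by positivity) hrv hq) hup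
    nlinarith [rpow_nonneg (by positivity : 0 ≤ r / 2) p]

lemma integrableOn_Icc_abs_sub_rpow_mul_abs_rpow {p q : ℝ} (hp1 : -1 < p) (hp : p ≤ 0)
    (hq1 : -1 < q) (hq : q ≤ 0) {x : ℝ} (hx : x ≠ 0) {A B : ℝ} (hAB : A ≤ B) :
    IntegrableOn (fun y : ℝ => |x - y| ^ p * |y| ^ q) (Icc A B) := by
  have integrableOn (f : ℝ → ℝ) (hf : IntervalIntegrable f volume A B) :
      IntegrableOn f (Icc A B) := (intervalIntegrable_iff_integrableOn_Icc_of_le hAB).mp hf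
  have dominant := ((integrableOn _ (intervalIntegrable_abs_rpow hq1 A B)).const_mul
    ((|x| / 2) ^ p)).add ((integrableOn _ (intervalIntegrable_abs_sub_rpow hp1 x A B)).const_mul
    ((|x| / 2) ^ q))
  refine dominant.mono' (by fun_prop) (ae_of_all _ fun y => ?_)
  rw [norm_of_nonneg (by positivity)]
  exact rpow_mul_rpow_le_of_le_add hp hq (abs_pos.mpr hx) (abs_nonneg _) (abs_nonneg _)
    (by simpa using abs_add_le (x - y) y)

def logPowerWeight (a b y : ℝ) : ℝ :=
  if 0 < |y| ∧ |y| ≤ 1 / 2 then |y| ^ (-a) * Real.log (1 / |y|) ^ (-b) else 0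

lemma log_two_le_log_one_div_s16 {y : ℝ} (hy0 : 0 < y) (hy : y ≤ 1 / 2) :
    Real.log 2 ≤ Real.log (1 / y) :=
  log_le_log two_pos (by rw [le_div_iff₀ hy0]; linarith)

lemma logPowerWeight_nonneg (a b y : ℝ) : 0 ≤ logPowerWeight a b y := by
  unfold logPowerWeight
  split_ifs with hy
  · have hlog := (log_pos one_lt_two).trans_le (log_two_le_log_one_div_s16 hy.1 hy.2)
    exact mul_nonneg (rpow_nonneg (abs_nonneg y) _) (rpow_nonneg hlog.le _)
  · exact le_rfl

lemma logPowerWeight_le {b : ℝ} (hb : 0 ≤ b) (a y : ℝ) :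
    logPowerWeight a b y ≤ Real.log 2 ^ (-b) * |y| ^ (-a) := by
  unfold logPowerWeight
  split_ifs with hy
  · rw [mul_comm]
    exact mul_le_mul_of_nonneg_right (Real.rpow_le_rpow_of_nonpos (log_pos one_lt_two)
      (log_two_le_log_one_div_s16 hy.1 hy.2) (by linarith)) (by positivity)
  · positivity

lemma measurable_logPowerWeight (a b : ℝ) : Measurable (logPowerWeight a b) := by
  unfold logPowerWeight
  refine Measurable.ite ?_ (by fun_prop) measurable_const
  exact (measurableSet_lt measurable_const measurable_id.abs).inter
    (measurableSet_le measurable_id.abs measurable_const)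

lemma le_logPowerWeight {a b x y : ℝ} (ha : 0 ≤ a) (hb : 0 ≤ b) (hx : x ≤ 1 / 2)
    (hy : y ∈ Ioc (x / 2) x) : x ^ (-a) * Real.log (2 / x) ^ (-b) ≤ logPowerWeight a b y := by
  obtain ⟨hxy, hyx⟩ := hy
  have hy0 : 0 < y := by linarith
  have hlog_pos : 0 < Real.log (1 / y) :=
    (log_pos one_lt_two).trans_le (log_two_le_log_one_div_s16 hy0 (by linarith))
  have hlog_le : Real.log (1 / y) ≤ Real.log (2 / x) :=
    log_le_log (by positivity) (by rw [div_le_div_iff₀ hy0 (by linarith)]; linarith)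
  rw [logPowerWeight, abs_of_pos hy0, if_pos ⟨hy0, by linarith⟩]
  exact mul_le_mul (Real.rpow_le_rpow_of_nonpos hy0 hyx (by linarith))
    (Real.rpow_le_rpow_of_nonpos hlog_pos hlog_le (by linarith))
    (rpow_nonneg (hlog_pos.le.trans hlog_le) _) (rpow_nonneg hy0.le _)

lemma integrableOn_Icc_abs_sub_rpow_mul_logPowerWeight {p a b : ℝ} (hp1 : -1 < p) (hp : p ≤ 0)
    (ha : 0 ≤ a) (ha1 : a < 1) (hb : 0 ≤ b) {x : ℝ} (hx : x ≠ 0) {A B : ℝ} (hAB : A ≤ B) :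
    IntegrableOn (fun y : ℝ => |x - y| ^ p * logPowerWeight a b y) (Icc A B) := by
  have dominant := integrableOn_Icc_abs_sub_rpow_mul_abs_rpow hp1 hp (q := -a) (by linarith)
    (by linarith) hx hAB
  refine (dominant.const_mul (Real.log 2 ^ (-b))).mono' ?_ (ae_of_all _ fun y => ?_)
  · exact ((by fun_prop : Measurable fun y : ℝ => |x - y| ^ p).mul
      (measurable_logPowerWeight a b)).aestronglyMeasurable
  · rw [norm_of_nonneg (mul_nonneg (by positivity) (logPowerWeight_nonneg a b y))]
    calc |x - y| ^ p * logPowerWeight a b y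
        ≤ |x - y| ^ p * (Real.log 2 ^ (-b) * |y| ^ (-a)) := by
          gcongr; exact logPowerWeight_le hb a y
      _ = Real.log 2 ^ (-b) * (|x - y| ^ p * |y| ^ (-a)) := by ring

/-- One-dimensional Riesz potential lower bound: with
`g(y) = |y|^{-a} (log(1/|y|))^{-b} 𝟙_{0<|y|≤1/2}` and
`f(x) = c ∫_{-1/2}^{1/2} |x-y|^{s_0-1} g(y) dy`, one has
`f(x) ≥ C x^{s_0-a} (log(2/x))^{-b}` for `x ∈ (0,1/2]`. -/
theorem riesz_potential_lower_bound_dim_one (s0 a b c : ℝ)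
    (hs0 : 0 < s0) (hs01 : s0 < 1) (ha : s0 < a) (ha1 : a < 1) (hb : 0 < b) (hc : 0 < c)
    (g : ℝ → ℝ)
    (hg : ∀ y, g y = if 0 < |y| ∧ |y| ≤ 1 / 2 then
        |y| ^ (-a) * Real.log (1 / |y|) ^ (-b) else 0) :
    ∃ C : ℝ, 0 < C ∧ ∀ x : ℝ, 0 < x → x ≤ 1 / 2 →
      C * x ^ (s0 - a) * Real.log (2 / x) ^ (-b) ≤
        c * ∫ y in Set.Icc (-(1 / 2) : ℝ) (1 / 2), |x - y| ^ (s0 - 1) * g y := by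
  obtain rfl : g = logPowerWeight a b := funext hg
  refine ⟨c * 2 ^ (-s0) / s0, by positivity, fun x hx hx2 => ?_⟩
  have hsub : Ioc (x / 2) x ⊆ Icc (-(1 / 2)) (1 / 2) :=
    fun y hy => ⟨by linarith [hy.1], by linarith [hy.2]⟩
  have hint := integrableOn_Icc_abs_sub_rpow_mul_logPowerWeight (p := s0 - 1) (by linarith)
    (by linarith) (by linarith) ha1 hb.le hx.ne' (by norm_num : -(1 / 2 : ℝ) ≤ 1 / 2)
  have hkernel : ∫ y in Ioc (x / 2) x, |x - y| ^ (s0 - 1) = (x / 2) ^ s0 / s0 := by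
    simpa only [_root_.sub_half] using integral_Ioc_abs_sub_rpow hs0 x (h := x / 2) (by positivity)
  calc c * 2 ^ (-s0) / s0 * x ^ (s0 - a) * Real.log (2 / x) ^ (-b)
      = c * (x ^ (-a) * Real.log (2 / x) ^ (-b) * ∫ y in Ioc (x / 2) x, |x - y| ^ (s0 - 1)) := by
        rw [hkernel, div_rpow hx.le zero_le_two, sub_eq_add_neg, rpow_add hx,
          rpow_neg zero_le_two]
        field_simp
    _ = c * ∫ y in Ioc (x / 2) x, x ^ (-a) * Real.log (2 / x) ^ (-b) * |x - y| ^ (s0 - 1) := by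
        rw [integral_const_mul]
    _ ≤ c * ∫ y in Ioc (x / 2) x, |x - y| ^ (s0 - 1) * logPowerWeight a b y := by
        refine mul_le_mul_of_nonneg_left (setIntegral_mono_on ?_ (hint.mono_set hsub)
          measurableSet_Ioc fun y hy => ?_) hc.le
        · exact ((intervalIntegrable_abs_sub_rpow (by linarith) x (x / 2) x).1).const_mul _
        · rw [mul_comm]
          gcongr
          exact le_logPowerWeight (by linarith) hb.le hx2 hy
    _ ≤ c * ∫ y in Icc (-(1 / 2)) (1 / 2), |x - y| ^ (s0 - 1) * logPowerWeight a b y :=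
        mul_le_mul_of_nonneg_left (setIntegral_mono_set hint
          (ae_of_all _ fun y => mul_nonneg (by positivity) (logPowerWeight_nonneg a b y))
          hsub.eventuallyLE) hc.le
end
end
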